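/- Let r ≥ 3, d ≥ 3 and m ≥ d + 2, and set a = m − d − 1 and b = ⌈d/2⌉. Let T'' be the r-uniform supertree obtained from the loose path P_d^r by attaching a pendant edges at the joint vertex v_b and one pendant edge at the joint vertex v_{b+1}, and let T_{(m,d,r)}(b) be the r-uniform supertree obtained from P_d^r by attaching m − d pendant edges at a fixed core (non-joint) vertex of the edge e_b. Then φ(T'', x) − φ(T_{(m,d,r)}(b), x) = x^{(a+1)(r−1)−2}·( φ(P_{b−1}^r, x)·φ(P_{d−b}^r, x) − x^{r−1}·φ(P_{b−1}^r, x)·φ(P_{d−b−1}^r, x) ) + a·x^{(a+1)(r−1)−2}·( φ(P_{b−1}^r, x)·φ(P_{d−b}^r, x) − φ(P_{b−2}^r, x)·φ(P_{d−b+1}^r, x) ). -/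

import Mathlib

open Classical

noncomputable section

/-- A finite hypergraph: a finite vertex set together with a finite set of edges,
each edge being a finite set of vertices. -/
structure FinHypergraph (α : Type*) where
  verts : Finset α
  edges : Finset (Finset α)

namespace FinHypergraph

variable {α : Type*}

/-- Every edge of `H` is a subset of the vertex set of `H`. -/
def WellFormed (H : FinHypergraph α) : Prop := ∀ e ∈ H.edges, e ⊆ H.verts

/-- `H` is `r`-uniform: every edge has exactly `r` vertices. -/
def Uniform (H : FinHypergraph α) (r : ℕ) : Prop := ∀ e ∈ H.edges, e.card = r

/-- A set of edges is a matching if its members are pairwise disjoint. -/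
def IsMatchingSet (M : Finset (Finset α)) : Prop :=
  ∀ e ∈ M, ∀ f ∈ M, e ≠ f → Disjoint e f

/-- `m(H,k)`: the number of matchings of `H` consisting of exactly `k` edges. -/
noncomputable def matchCount (H : FinHypergraph α) (k : ℕ) : ℕ :=
  (H.edges.powerset.filter (fun M => M.card = k ∧ IsMatchingSet M)).card

/-- The matching polynomial `φ(H,x) = Σ_k (-1)^k m(H,k) x^(n - r·k)` of an
`r`-uniform hypergraph `H` with `n` vertices, evaluated at a real number `x`. -/
noncomputable def matchPoly (H : FinHypergraph α) (r : ℕ) (x : ℝ) : ℝ :=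
  ∑ k ∈ Finset.range (H.verts.card + 1),
    (-1 : ℝ) ^ k * (H.matchCount k : ℝ) * x ^ (H.verts.card - r * k)

/-- `H − S`: delete the vertices of `S` and all edges meeting `S`. -/
def removeVerts (H : FinHypergraph α) (S : Finset α) : FinHypergraph α :=
  ⟨H.verts \ S, H.edges.filter (fun e => Disjoint e S)⟩

/-- The edges of the `r`-uniform loose path of length `p` along the vertex labelling `w`:
the `i`-th edge consists of the `r` vertices `w (i*(r-1)), …, w ((i+1)*(r-1))`, so that
consecutive edges share exactly one vertex. -/
def loosePathEdges (r p : ℕ) (w : ℕ → α) : Finset (Finset α) :=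
  (Finset.range p).image (fun i => (Finset.Icc (i * (r - 1)) ((i + 1) * (r - 1))).image w)

/-- `P` is an `r`-uniform loose path with `m` edges (`P_m^r`); for `m = 0` it is a single
vertex with no edge. -/
def IsLoosePath (r m : ℕ) (P : FinHypergraph α) : Prop :=
  ∃ w : ℕ → α, Set.InjOn w (Set.Iic (m * (r - 1))) ∧
    P.verts = (Finset.Icc 0 (m * (r - 1))).image w ∧
    P.edges = loosePathEdges r m w

/-- The `r`-uniform loose path with `m` edges realized along the vertex labelling `w`. -/
def pathHypergraph (r m : ℕ) (w : ℕ → α) : FinHypergraph α :=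
  ⟨(Finset.Icc 0 (m * (r - 1))).image w, loosePathEdges r m w⟩

/-- `T` is obtained from `H` by attaching `k` pendant edges at the vertex `u`: each new
edge consists of `u` together with `r - 1` new vertices, the new vertices of distinct new
edges being distinct. -/
def IsPendantEdgesAttach (r k : ℕ) (H : FinHypergraph α) (u : α) (T : FinHypergraph α) : Prop :=
  u ∈ H.verts ∧ ∃ F : Fin k → Finset α,
    (∀ i, (F i).card = r - 1) ∧
    (∀ i, Disjoint (F i) H.verts) ∧
    (∀ i j, i ≠ j → Disjoint (F i) (F j)) ∧
    T.verts = H.verts ∪ Finset.univ.biUnion F ∧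
    T.edges = H.edges ∪ Finset.univ.image (fun i => insert u (F i))

end FinHypergraph

/-!
Both supertrees arise from a loose path by attaching pendant edges, and everything follows from
the edge recurrence `φ(H) = φ(H − e) − φ(H − V(e))` together with multiplicativity of `φ` over
disjoint unions. Peeling off pendant edges one at a time, attaching `k` of them at `u` gives
`φ(T) = x^(k(r−1)) φ(H) − k x^((k−1)(r−1)) φ(H − u)`; deleting one or two vertices from a loose
path leaves two shorter loose paths and some isolated vertices; and the loose paths satisfy
`φ(P_{i+2}) = x^(r−1) φ(P_{i+1}) − x^(r−2) φ(P_i)`. This writes `φ(T'')` and `φ(T_{(m,d,r)}(b))`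
in terms of `φ(P_i)`, and after one use of the path recurrence (for `P_{d−b+1}`) the claimed
identity is a ring identity.
-/

namespace FinHypergraph

variable {α : Type*} {r : ℕ}

protected lemma ext {H H' : FinHypergraph α} (hv : H.verts = H'.verts)
    (he : H.edges = H'.edges) : H = H' := by
  cases H; cases H'; congr

def matchings (H : FinHypergraph α) : Finset (Finset (Finset α)) :=
  H.edges.powerset.filter IsMatchingSet

lemma mem_matchings {H : FinHypergraph α} {M : Finset (Finset α)} :
    M ∈ H.matchings ↔ M ⊆ H.edges ∧ IsMatchingSet M := by
  simp [matchings]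

lemma IsMatchingSet.subset {M N : Finset (Finset α)} (hN : IsMatchingSet N) (hMN : M ⊆ N) :
    IsMatchingSet M :=
  fun e he f hf => hN e (hMN he) f (hMN hf)

lemma inter_edges_mem_matchings {M : Finset (Finset α)} (hM : IsMatchingSet M)
    (H : FinHypergraph α) : M ∩ H.edges ∈ H.matchings :=
  mem_matchings.2 ⟨Finset.inter_subset_right, hM.subset Finset.inter_subset_left⟩

lemma Uniform.nonempty {H : FinHypergraph α} (hU : H.Uniform r) (hr : 1 ≤ r) {e : Finset α}
    (he : e ∈ H.edges) : e.Nonempty :=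
  Finset.card_pos.1 (by rw [hU e he]; omega)

section MatchingPolynomial

variable {H : FinHypergraph α}

lemma mul_card_le_card_verts (hWF : H.WellFormed) (hU : H.Uniform r)
    {M : Finset (Finset α)} (hM : M ∈ H.matchings) : r * M.card ≤ H.verts.card := by
  obtain ⟨hsub, hmat⟩ := mem_matchings.1 hM
  calc r * M.card = ∑ e ∈ M, e.card := by
        rw [Finset.sum_congr rfl fun e he => hU e (hsub he), Finset.sum_const, smul_eq_mul,
          mul_comm]
    _ = (M.biUnion id).card := (Finset.card_biUnion hmat).symm
    _ ≤ H.verts.card := Finset.card_le_card <| Finset.biUnion_subset.2 fun e he => hWF e (hsub he)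

lemma matchPoly_eq_sum_matchings (hr : 1 ≤ r) (hWF : H.WellFormed) (hU : H.Uniform r)
    (x : ℝ) : H.matchPoly r x =
      ∑ M ∈ H.matchings, (-1 : ℝ) ^ M.card * x ^ (H.verts.card - r * M.card) := by
  have hmaps : ∀ M ∈ H.matchings, M.card ∈ Finset.range (H.verts.card + 1) := fun M hM => by
    have := mul_card_le_card_verts hWF hU hM
    rw [Finset.mem_range]; nlinarith
  rw [← Finset.sum_fiberwise_of_maps_to hmaps, matchPoly]
  refine Finset.sum_congr rfl fun k _ => ?_
  have hcount : H.matchCount k = (H.matchings.filter (·.card = k)).card := by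
    simp only [matchCount, matchings, Finset.filter_filter, and_comm]
  rw [hcount, Finset.sum_congr rfl fun M hM => by rw [(Finset.mem_filter.1 hM).2],
    Finset.sum_const, nsmul_eq_mul, mul_assoc, mul_left_comm, ← mul_assoc]

lemma matchPoly_edgeless (V : Finset α) (x : ℝ) :
    (⟨V, ∅⟩ : FinHypergraph α).matchPoly r x = x ^ V.card := by
  have hcount : ∀ k, (⟨V, ∅⟩ : FinHypergraph α).matchCount k = if k = 0 then 1 else 0 := by
    rintro (_ | k)
    · rw [if_pos rfl, matchCount, Finset.card_eq_one]
      exact ⟨∅, by ext M; simp +contextual [IsMatchingSet]⟩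
    · simp [matchCount, Finset.filter_eq_empty_iff]
  rw [matchPoly, Finset.sum_eq_single 0 (fun k _ hk => by simp [hcount, hk]) (by simp)]
  simp [hcount]

end MatchingPolynomial

section Operations

variable {H : FinHypergraph α}

lemma WellFormed.removeVerts (hWF : H.WellFormed) (S : Finset α) :
    (H.removeVerts S).WellFormed := fun e he =>
  Finset.subset_sdiff.2 ⟨hWF e (Finset.mem_filter.1 he).1, (Finset.mem_filter.1 he).2⟩

lemma Uniform.removeVerts (hU : H.Uniform r) (S : Finset α) : (H.removeVerts S).Uniform r :=
  fun e he => hU e (Finset.mem_filter.1 he).1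

lemma removeVerts_removeVerts (S S' : Finset α) :
    (H.removeVerts S).removeVerts S' = H.removeVerts (S ∪ S') := by
  refine FinHypergraph.ext (sdiff_sdiff_left) ?_
  simp only [removeVerts, Finset.filter_filter, Finset.disjoint_union_right]

def deleteEdge (H : FinHypergraph α) (e : Finset α) : FinHypergraph α :=
  ⟨H.verts, H.edges.erase e⟩

lemma WellFormed.deleteEdge (hWF : H.WellFormed) (e : Finset α) : (H.deleteEdge e).WellFormed :=
  fun f hf => hWF f (Finset.mem_of_mem_erase hf)

lemma Uniform.deleteEdge (hU : H.Uniform r) (e : Finset α) : (H.deleteEdge e).Uniform r :=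
  fun f hf => hU f (Finset.mem_of_mem_erase hf)

def union (H₁ H₂ : FinHypergraph α) : FinHypergraph α :=
  ⟨H₁.verts ∪ H₂.verts, H₁.edges ∪ H₂.edges⟩

def addVerts (H : FinHypergraph α) (S : Finset α) : FinHypergraph α :=
  ⟨H.verts ∪ S, H.edges⟩

lemma WellFormed.addVerts (hWF : H.WellFormed) (S : Finset α) : (H.addVerts S).WellFormed :=
  fun e he => (hWF e he).trans Finset.subset_union_left

lemma Uniform.addVerts (hU : H.Uniform r) (S : Finset α) : (H.addVerts S).Uniform r := hU

lemma addVerts_eq_union (S : Finset α) : H.addVerts S = H.union ⟨S, ∅⟩ := by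
  simp [addVerts, union]

end Operations

section EdgeRecurrence

variable {H : FinHypergraph α} {e : Finset α}

lemma matchings_deleteEdge : (H.deleteEdge e).matchings = H.matchings.filter (e ∉ ·) := by
  ext M
  simp only [mem_matchings, deleteEdge, Finset.mem_filter, Finset.subset_erase]
  tauto

lemma erase_mem_matchings_removeVerts {M : Finset (Finset α)} (hM : M ∈ H.matchings)
    (heM : e ∈ M) : M.erase e ∈ (H.removeVerts e).matchings := by
  obtain ⟨hsub, hmat⟩ := mem_matchings.1 hM
  refine mem_matchings.2 ⟨fun f hf => ?_, hmat.subset (Finset.erase_subset e M)⟩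
  obtain ⟨hfe, hfM⟩ := Finset.mem_erase.1 hf
  exact Finset.mem_filter.2 ⟨hsub hfM, hmat f hfM e heM hfe⟩

lemma insert_mem_matchings {N : Finset (Finset α)} (hN : N ∈ (H.removeVerts e).matchings)
    (he : e ∈ H.edges) : insert e N ∈ H.matchings := by
  obtain ⟨hsub, hmat⟩ := mem_matchings.1 hN
  have hdisj : ∀ f ∈ N, Disjoint f e := fun f hf => (Finset.mem_filter.1 (hsub hf)).2
  refine mem_matchings.2 ⟨Finset.insert_subset he fun f hf => (Finset.mem_filter.1 (hsub hf)).1,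
    fun f hf g hg hfg => ?_⟩
  rcases Finset.mem_insert.1 hf with rfl | hfN
  · rcases Finset.mem_insert.1 hg with rfl | hgN
    · exact absurd rfl hfg
    · exact (hdisj g hgN).symm
  · rcases Finset.mem_insert.1 hg with rfl | hgN
    · exact hdisj f hfN
    · exact hmat f hfN g hgN hfg

lemma not_mem_of_mem_matchings_removeVerts (he : e.Nonempty) {N : Finset (Finset α)}
    (hN : N ∈ (H.removeVerts e).matchings) : e ∉ N := fun heN =>
  he.ne_empty <| disjoint_self.1 (Finset.mem_filter.1 ((mem_matchings.1 hN).1 heN)).2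

/-- Matchings containing `e` correspond to matchings of `H` with the vertices of `e` removed. -/
lemma sum_matchings_mem (hr : 1 ≤ r) (hWF : H.WellFormed) (hU : H.Uniform r)
    (he : e ∈ H.edges) (x : ℝ) :
    ∑ M ∈ H.matchings.filter (e ∈ ·), (-1 : ℝ) ^ M.card * x ^ (H.verts.card - r * M.card)
      = -(H.removeVerts e).matchPoly r x := by
  rw [matchPoly_eq_sum_matchings hr (hWF.removeVerts e) (hU.removeVerts e),
    ← Finset.sum_neg_distrib]
  have hcard : (H.removeVerts e).verts.card = H.verts.card - r := by
    rw [removeVerts, Finset.card_sdiff_of_subset (hWF e he), hU e he]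
  refine Finset.sum_nbij' (·.erase e) (insert e) (fun M hM => ?_) (fun N hN => ?_)
    (fun M hM => Finset.insert_erase (Finset.mem_filter.1 hM).2)
    (fun N hN => Finset.erase_insert (not_mem_of_mem_matchings_removeVerts
      (hU.nonempty hr he) hN)) (fun M hM => ?_)
  · obtain ⟨hM, heM⟩ := Finset.mem_filter.1 hM
    exact erase_mem_matchings_removeVerts hM heM
  · exact Finset.mem_filter.2 ⟨insert_mem_matchings hN he, Finset.mem_insert_self e N⟩
  · obtain ⟨hM, heM⟩ := Finset.mem_filter.1 hM
    obtain ⟨k, hk⟩ : ∃ k, M.card = k + 1 := ⟨M.card - 1, by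
      have := Finset.card_pos.2 ⟨e, heM⟩; omega⟩
    have hbound := mul_card_le_card_verts hWF hU hM
    rw [Finset.card_erase_of_mem heM, hcard, hk, Nat.add_sub_cancel, pow_succ,
      show H.verts.card - r * (k + 1) = H.verts.card - r - r * k by
        rw [Nat.mul_succ]; omega]
    ring

lemma matchPoly_eq_deleteEdge_sub_removeVerts (hr : 1 ≤ r) (hWF : H.WellFormed)
    (hU : H.Uniform r) (he : e ∈ H.edges) (x : ℝ) :
    H.matchPoly r x = (H.deleteEdge e).matchPoly r x - (H.removeVerts e).matchPoly r x := by
  rw [matchPoly_eq_sum_matchings hr hWF hU, ← Finset.sum_filter_add_sum_filter_not _ (e ∈ ·),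
    sum_matchings_mem hr hWF hU he, matchPoly_eq_sum_matchings hr (hWF.deleteEdge e)
      (hU.deleteEdge e), matchings_deleteEdge]
  simp only [deleteEdge]
  ring

end EdgeRecurrence

section Union

variable {H₁ H₂ : FinHypergraph α}

lemma WellFormed.union (h₁ : H₁.WellFormed) (h₂ : H₂.WellFormed) : (H₁.union H₂).WellFormed := by
  intro e he
  rcases Finset.mem_union.1 he with h | h
  · exact (h₁ e h).trans Finset.subset_union_left
  · exact (h₂ e h).trans Finset.subset_union_right

lemma Uniform.union (h₁ : H₁.Uniform r) (h₂ : H₂.Uniform r) : (H₁.union H₂).Uniform r := by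
  intro e he
  rcases Finset.mem_union.1 he with h | h
  exacts [h₁ e h, h₂ e h]

lemma union_mem_matchings_union (hWF₁ : H₁.WellFormed) (hWF₂ : H₂.WellFormed)
    (hdisj : Disjoint H₁.verts H₂.verts) {M₁ M₂ : Finset (Finset α)} (hM₁ : M₁ ∈ H₁.matchings)
    (hM₂ : M₂ ∈ H₂.matchings) : M₁ ∪ M₂ ∈ (H₁.union H₂).matchings := by
  obtain ⟨hs₁, hm₁⟩ := mem_matchings.1 hM₁
  obtain ⟨hs₂, hm₂⟩ := mem_matchings.1 hM₂
  refine mem_matchings.2 ⟨Finset.union_subset_union hs₁ hs₂, fun e he f hf hef => ?_⟩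
  rcases Finset.mem_union.1 he with he | he <;> rcases Finset.mem_union.1 hf with hf | hf
  · exact hm₁ e he f hf hef
  · exact hdisj.mono (hWF₁ e (hs₁ he)) (hWF₂ f (hs₂ hf))
  · exact (hdisj.mono (hWF₁ f (hs₁ hf)) (hWF₂ e (hs₂ he))).symm
  · exact hm₂ e he f hf hef

lemma matchPoly_union (hr : 1 ≤ r) (hWF₁ : H₁.WellFormed) (hU₁ : H₁.Uniform r)
    (hWF₂ : H₂.WellFormed) (hU₂ : H₂.Uniform r) (hdisj : Disjoint H₁.verts H₂.verts) (x : ℝ) :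
    (H₁.union H₂).matchPoly r x = H₁.matchPoly r x * H₂.matchPoly r x := by
  have hE : Disjoint H₁.edges H₂.edges := Finset.disjoint_left.2 fun e he₁ he₂ => by
    obtain ⟨v, hv⟩ := hU₁.nonempty hr he₁
    exact Finset.disjoint_left.1 hdisj (hWF₁ e he₁ hv) (hWF₂ e he₂ hv)
  rw [matchPoly_eq_sum_matchings hr (hWF₁.union hWF₂) (hU₁.union hU₂),
    matchPoly_eq_sum_matchings hr hWF₁ hU₁, matchPoly_eq_sum_matchings hr hWF₂ hU₂,
    Finset.sum_mul_sum, ← Finset.sum_product']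
  refine Finset.sum_nbij' (fun M => (M ∩ H₁.edges, M ∩ H₂.edges)) (fun p => p.1 ∪ p.2)
    (fun M hM => ?_) (fun p hp => ?_) (fun M hM => ?_) (fun p hp => ?_) (fun M hM => ?_)
  · have hm := (mem_matchings.1 hM).2
    exact Finset.mem_product.2 ⟨inter_edges_mem_matchings hm _, inter_edges_mem_matchings hm _⟩
  · obtain ⟨hp₁, hp₂⟩ := Finset.mem_product.1 hp
    exact union_mem_matchings_union hWF₁ hWF₂ hdisj hp₁ hp₂
  · rw [← Finset.inter_union_distrib_left]
    exact Finset.inter_eq_left.2 (mem_matchings.1 hM).1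
  · obtain ⟨hp₁, hp₂⟩ := Finset.mem_product.1 hp
    have hs₁ := (mem_matchings.1 hp₁).1
    have hs₂ := (mem_matchings.1 hp₂).1
    simp only [Finset.union_inter_distrib_right, Finset.inter_eq_left.2 hs₁,
      Finset.inter_eq_left.2 hs₂, Finset.disjoint_iff_inter_eq_empty.1 (hE.mono_left hs₁),
      Finset.disjoint_iff_inter_eq_empty.1 (hE.symm.mono_left hs₂), Finset.union_empty,
      Finset.empty_union]
  · have hM₁ := inter_edges_mem_matchings (mem_matchings.1 hM).2 H₁
    have hM₂ := inter_edges_mem_matchings (mem_matchings.1 hM).2 H₂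
    have hcardM : M.card = (M ∩ H₁.edges).card + (M ∩ H₂.edges).card := by
      rw [← Finset.card_union_of_disjoint (hE.mono Finset.inter_subset_right
        Finset.inter_subset_right), ← Finset.inter_union_distrib_left,
        Finset.inter_eq_left.2 (show M ⊆ H₁.edges ∪ H₂.edges from (mem_matchings.1 hM).1)]
    have hb₁ := mul_card_le_card_verts hWF₁ hU₁ hM₁
    have hb₂ := mul_card_le_card_verts hWF₂ hU₂ hM₂
    have hexp : (H₁.union H₂).verts.card - r * M.card
        = (H₁.verts.card - r * (M ∩ H₁.edges).card)
          + (H₂.verts.card - r * (M ∩ H₂.edges).card) := by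
      rw [union, Finset.card_union_of_disjoint hdisj, hcardM, mul_add]; omega
    rw [hexp, hcardM, pow_add, pow_add]
    ring

lemma matchPoly_addVerts (hr : 1 ≤ r) {H : FinHypergraph α} (hWF : H.WellFormed)
    (hU : H.Uniform r) {S : Finset α} (hS : Disjoint H.verts S) (x : ℝ) :
    (H.addVerts S).matchPoly r x = H.matchPoly r x * x ^ S.card := by
  rw [addVerts_eq_union, matchPoly_union hr hWF hU (by simp [WellFormed]) (by simp [Uniform]) hS,
    matchPoly_edgeless]

end Union

section PendantEdges

variable {k : ℕ} {H T : FinHypergraph α} {u : α}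

lemma IsPendantEdgesAttach.wellFormed (hWF : H.WellFormed)
    (hT : IsPendantEdgesAttach r k H u T) : T.WellFormed := by
  obtain ⟨hu, F, -, -, -, hv, he⟩ := hT
  intro e he'
  rw [he] at he'
  rw [hv]
  rcases Finset.mem_union.1 he' with h | h
  · exact (hWF e h).trans Finset.subset_union_left
  · obtain ⟨i, -, rfl⟩ := Finset.mem_image.1 h
    exact Finset.insert_subset (Finset.mem_union_left _ hu)
      ((Finset.subset_biUnion_of_mem F (Finset.mem_univ i)).trans Finset.subset_union_right)

lemma IsPendantEdgesAttach.uniform (hr : 1 ≤ r) (hU : H.Uniform r)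
    (hT : IsPendantEdgesAttach r k H u T) : T.Uniform r := by
  obtain ⟨hu, F, hcard, hdisj, -, -, he⟩ := hT
  intro e he'
  rw [he] at he'
  rcases Finset.mem_union.1 he' with h | h
  · exact hU e h
  · obtain ⟨i, -, rfl⟩ := Finset.mem_image.1 h
    rw [Finset.card_insert_of_notMem fun huF => Finset.disjoint_left.1 (hdisj i) huF hu,
      hcard i]
    omega

lemma IsPendantEdgesAttach.exists_succ (hT : IsPendantEdgesAttach r (k + 1) H u T) :
    ∃ (T' : FinHypergraph α) (F₀ : Finset α), IsPendantEdgesAttach r k H u T' ∧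
      F₀.card = r - 1 ∧ Disjoint T'.verts F₀ ∧ T.verts = T'.verts ∪ F₀ ∧
      T.edges = insert (insert u F₀) T'.edges := by
  obtain ⟨hu, F, hcard, hdisj, hpair, hv, he⟩ := hT
  have hsucc : ∀ i j : Fin k, i ≠ j → Disjoint (F i.succ) (F j.succ) :=
    fun i j hij => hpair _ _ (Fin.succ_injective k |>.ne hij)
  refine ⟨⟨H.verts ∪ Finset.univ.biUnion (fun i : Fin k => F i.succ),
    H.edges ∪ Finset.univ.image (fun i : Fin k => insert u (F i.succ))⟩, F 0,
    ⟨hu, _, fun i => hcard _, fun i => hdisj _, hsucc, rfl, rfl⟩, hcard 0, ?_, ?_, ?_⟩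
  · refine Finset.disjoint_union_left.2 ⟨(hdisj 0).symm, ?_⟩
    exact (Finset.disjoint_biUnion_left _ _ _).2 fun i _ => hpair _ _ (Fin.succ_ne_zero i)
  · ext y
    simp only [hv, Finset.mem_union, Finset.mem_biUnion, Finset.mem_univ, true_and,
      Fin.exists_fin_succ]
    tauto
  · ext e
    simp only [he, Finset.mem_union, Finset.mem_insert, Finset.mem_image, Finset.mem_univ,
      true_and, Fin.exists_fin_succ, eq_comm (a := e)]
    tauto

lemma IsPendantEdgesAttach.removeVerts (hT : IsPendantEdgesAttach r k H u T) {S : Finset α}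
    (hS : S ⊆ H.verts) (huS : u ∉ S) :
    IsPendantEdgesAttach r k (H.removeVerts S) u (T.removeVerts S) := by
  obtain ⟨hu, F, hcard, hdisj, hpair, hv, he⟩ := hT
  have hFS : ∀ i, Disjoint (F i) S := fun i => (hdisj i).mono_right hS
  refine ⟨Finset.mem_sdiff.2 ⟨hu, huS⟩, F, hcard, fun i => (hdisj i).mono_right
    Finset.sdiff_subset, hpair, ?_, ?_⟩
  · rw [FinHypergraph.removeVerts, hv, Finset.union_sdiff_distrib, FinHypergraph.removeVerts,
      Finset.sdiff_eq_self_of_disjoint ((Finset.disjoint_biUnion_left _ _ _).2 fun i _ => hFS i)]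
  · rw [FinHypergraph.removeVerts, he, Finset.filter_union, Finset.filter_true_of_mem
      (s := Finset.univ.image fun i => insert u (F i)) fun e he' => ?_]
    · rfl
    obtain ⟨i, -, rfl⟩ := Finset.mem_image.1 he'
    exact Finset.disjoint_insert_left.2 ⟨huS, hFS i⟩

lemma IsPendantEdgesAttach.removeVerts_self (hT : IsPendantEdgesAttach r k H u T) :
    ∃ S : Finset α, S.card = k * (r - 1) ∧ Disjoint (H.removeVerts {u}).verts S ∧
      T.removeVerts {u} = (H.removeVerts {u}).addVerts S := by
  obtain ⟨hu, F, hcard, hdisj, hpair, hv, he⟩ := hT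
  have huF : ∀ i, u ∉ F i := fun i huF => Finset.disjoint_left.1 (hdisj i) huF hu
  refine ⟨Finset.univ.biUnion F, ?_, ?_, FinHypergraph.ext ?_ ?_⟩
  · rw [Finset.card_biUnion fun i _ j _ hij => hpair i j hij, Finset.sum_congr rfl
      fun i _ => hcard i, Finset.sum_const, Finset.card_univ, Fintype.card_fin, smul_eq_mul]
  · exact (Finset.disjoint_biUnion_right _ _ _).2 fun i _ =>
      ((hdisj i).mono_right Finset.sdiff_subset).symm
  · rw [FinHypergraph.removeVerts, hv, Finset.union_sdiff_distrib, addVerts,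
      FinHypergraph.removeVerts,
      Finset.sdiff_eq_self_of_disjoint ((Finset.disjoint_biUnion_left _ _ _).2 fun i _ =>
        Finset.disjoint_singleton_right.2 (huF i))]
  · rw [FinHypergraph.removeVerts, he, Finset.filter_union, Finset.filter_false_of_mem
      (s := Finset.univ.image fun i => insert u (F i)) fun e he' => ?_,
      Finset.union_empty]
    · rfl
    obtain ⟨i, -, rfl⟩ := Finset.mem_image.1 he'
    simp

lemma matchPoly_removeVerts_of_isPendantEdgesAttach (hr : 1 ≤ r) (hWF : H.WellFormed)
    (hU : H.Uniform r) (hT : IsPendantEdgesAttach r k H u T) (x : ℝ) :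
    (T.removeVerts {u}).matchPoly r x = x ^ (k * (r - 1)) * (H.removeVerts {u}).matchPoly r x := by
  obtain ⟨S, hcard, hdisj, hTS⟩ := hT.removeVerts_self
  rw [hTS, matchPoly_addVerts hr (hWF.removeVerts _) (hU.removeVerts _) hdisj, hcard, mul_comm]

theorem matchPoly_of_isPendantEdgesAttach (hr : 2 ≤ r) (hWF : H.WellFormed) (hU : H.Uniform r)
    (hT : IsPendantEdgesAttach r k H u T) (x : ℝ) :
    T.matchPoly r x = x ^ (k * (r - 1)) * H.matchPoly r x
      - k * x ^ ((k - 1) * (r - 1)) * (H.removeVerts {u}).matchPoly r x := by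
  induction k generalizing T with
  | zero =>
    obtain ⟨-, F, -, -, -, hv, he⟩ := hT
    rw [show T = H from FinHypergraph.ext (by simp [hv]) (by simp [he])]
    simp
  | succ k ih =>
    obtain ⟨T', F₀, hT', hcard, hdisj, hv, he⟩ := hT.exists_succ
    have hT'WF := hT'.wellFormed hWF
    set f := insert u F₀
    have hf : f ∈ T.edges := he ▸ Finset.mem_insert_self f T'.edges
    have hfT' : f ∉ T'.edges := fun hf' => by
      obtain ⟨y, hy⟩ := Finset.card_pos.1 (show 0 < F₀.card by omega)
      exact Finset.disjoint_right.1 hdisj hy (hT'WF f hf' (Finset.mem_insert_of_mem hy))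
    have hdel : T.deleteEdge f = T'.addVerts F₀ :=
      FinHypergraph.ext hv (by rw [deleteEdge, he, Finset.erase_insert hfT']; rfl)
    have hrem : T.removeVerts f = T'.removeVerts {u} := by
      refine FinHypergraph.ext ?_ ?_
      · ext y
        have hy : y ∈ F₀ → y ∉ T'.verts := fun h => Finset.disjoint_right.1 hdisj h
        simp only [removeVerts, hv, f, Finset.mem_sdiff, Finset.mem_union, Finset.mem_insert,
          Finset.mem_singleton]
        tauto
      · rw [removeVerts, removeVerts, he, Finset.filter_insert, if_neg (by simp [f])]
        exact Finset.filter_congr fun e he' => by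
          rw [Finset.disjoint_insert_right, Finset.disjoint_singleton_right,
            and_iff_left (hdisj.mono_left (hT'WF e he'))]
    have hT'U := hT'.uniform (by omega) hU
    rw [matchPoly_eq_deleteEdge_sub_removeVerts (by omega) (hT.wellFormed hWF)
        (hT.uniform (by omega) hU) hf, hdel, hrem,
      matchPoly_addVerts (by omega) hT'WF hT'U hdisj, hcard,
      matchPoly_removeVerts_of_isPendantEdgesAttach (by omega) hWF hU hT', ih hT']
    rcases k with _ | k
    · simp [mul_comm]
    · simp only [Nat.add_sub_cancel, add_mul (k + 1), one_mul, pow_add, Nat.cast_add,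
        Nat.cast_one]
      ring

end PendantEdges

lemma disjoint_image_iff_of_injOn {β : Type*} [DecidableEq β] {w : β → α} {s : Set β}
    (hw : Set.InjOn w s) {A B : Finset β} (hA : ↑A ⊆ s) (hB : ↑B ⊆ s) :
    Disjoint (A.image w) (B.image w) ↔ Disjoint A B := by
  rw [Finset.disjoint_iff_inter_eq_empty, ← Finset.image_inter_of_injOn A B
    (hw.mono (Set.union_subset hA hB)), Finset.image_eq_empty,
    Finset.disjoint_iff_inter_eq_empty]

section LoosePaths

variable {w : ℕ → α} {d j : ℕ}

def pathEdge (r : ℕ) (w : ℕ → α) (i : ℕ) : Finset α :=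
  (Finset.Icc (i * (r - 1)) ((i + 1) * (r - 1))).image w

lemma pathHypergraph_edges (p : ℕ) :
    (pathHypergraph r p w).edges = (Finset.range p).image (pathEdge r w) := rfl

lemma pathHypergraph_wellFormed (r p : ℕ) (w : ℕ → α) : (pathHypergraph r p w).WellFormed := by
  intro e he
  obtain ⟨i, hi, rfl⟩ := Finset.mem_image.1 he
  have hle : (i + 1) * (r - 1) ≤ p * (r - 1) := Nat.mul_le_mul_right _ (Finset.mem_range.1 hi)
  exact Finset.image_subset_image fun a ha => by
    simp only [Finset.mem_Icc] at ha ⊢; omega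

lemma card_pathEdge (hr : 1 ≤ r) {N i : ℕ} (hw : Set.InjOn w (Set.Iic N))
    (hi : (i + 1) * (r - 1) ≤ N) : (pathEdge r w i).card = r := by
  rw [pathEdge, Finset.card_image_of_injOn (hw.mono fun a ha => by
    simp only [Finset.coe_Icc, Set.mem_Icc, Set.mem_Iic] at ha ⊢; omega), Nat.card_Icc,
    add_mul, one_mul]
  omega

lemma pathHypergraph_uniform (hr : 1 ≤ r) {p : ℕ} (hw : Set.InjOn w (Set.Iic (p * (r - 1)))) :
    (pathHypergraph r p w).Uniform r := by
  intro e he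
  obtain ⟨i, hi, rfl⟩ := Finset.mem_image.1 he
  exact card_pathEdge hr hw (Nat.mul_le_mul_right _ (Finset.mem_range.1 hi))

def pathPoly (r : ℕ) : ℕ → ℝ → ℝ
  | 0, x => x
  | 1, x => x ^ r - 1
  | (m + 2), x => x ^ (r - 1) * pathPoly r (m + 1) x - x ^ (r - 2) * pathPoly r m x

lemma pathPoly_add_two (r n : ℕ) (x : ℝ) :
    pathPoly r (n + 2) x = x ^ (r - 1) * pathPoly r (n + 1) x - x ^ (r - 2) * pathPoly r n x :=
  rfl

lemma deleteEdge_pathHypergraph_succ (hr : 2 ≤ r) {p : ℕ}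
    (hw : Set.InjOn w (Set.Iic ((p + 1) * (r - 1)))) :
    (pathHypergraph r (p + 1) w).deleteEdge (pathEdge r w p)
      = (pathHypergraph r p w).addVerts
          ((Finset.Ioc (p * (r - 1)) ((p + 1) * (r - 1))).image w) := by
  have hsucc : (p + 1) * (r - 1) = p * (r - 1) + (r - 1) := by ring
  have hlast : pathEdge r w p ∉ (Finset.range p).image (pathEdge r w) := fun h => by
    have hmem := pathHypergraph_wellFormed r p w _ h
      (Finset.mem_image_of_mem w (Finset.right_mem_Icc.2 (by omega)))
    obtain ⟨a, ha, hwa⟩ := Finset.mem_image.1 hmem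
    rw [Finset.mem_Icc] at ha
    have := hw (show a ≤ _ by omega) (Set.mem_Iic.2 le_rfl) hwa
    omega
  refine FinHypergraph.ext ?_ ?_
  · simp only [deleteEdge, pathHypergraph, addVerts, ← Finset.image_union]
    congr 1
    ext a
    simp only [Finset.mem_Icc, Finset.mem_union, Finset.mem_Ioc]
    constructor <;> intro h <;> omega
  · rw [deleteEdge, pathHypergraph_edges, Finset.range_add_one, Finset.image_insert,
      Finset.erase_insert hlast]
    rfl

lemma removeVerts_pathHypergraph (hw : Set.InjOn w (Set.Iic (d * (r - 1))))
    {J : Finset ℕ} (hJ : ∀ a ∈ J, a ≤ d * (r - 1)) :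
    (pathHypergraph r d w).removeVerts (J.image w) =
      ⟨(Finset.Icc 0 (d * (r - 1)) \ J).image w, ((Finset.range d).filter fun i =>
        Disjoint (Finset.Icc (i * (r - 1)) ((i + 1) * (r - 1))) J).image (pathEdge r w)⟩ := by
  refine FinHypergraph.ext ?_ ?_
  · exact (Finset.image_sdiff_of_injOn (hw.mono fun a ha => by simpa using ha)
      fun a ha => Finset.mem_Icc.2 ⟨a.zero_le, hJ a ha⟩).symm
  · dsimp only [removeVerts]
    rw [pathHypergraph_edges, Finset.filter_image]
    refine congrArg _ (Finset.filter_congr fun i hi => disjoint_image_iff_of_injOn hw ?_ ?_)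
    · have : (i + 1) * (r - 1) ≤ d * (r - 1) := Nat.mul_le_mul_right _ (Finset.mem_range.1 hi)
      intro a ha
      simp only [Finset.coe_Icc, Set.mem_Icc, Set.mem_Iic] at ha ⊢
      omega
    · exact fun a ha => hJ a ha

lemma removeVerts_pathEdge_pathHypergraph (hr : 2 ≤ r) {p : ℕ}
    (hw : Set.InjOn w (Set.Iic ((p + 2) * (r - 1)))) :
    (pathHypergraph r (p + 2) w).removeVerts (pathEdge r w (p + 1))
      = (pathHypergraph r p w).addVerts
          ((Finset.Ioo (p * (r - 1)) ((p + 1) * (r - 1))).image w) := by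
  have h₁ : (p + 1) * (r - 1) = p * (r - 1) + (r - 1) := by ring
  have h₂ : (p + 1 + 1) * (r - 1) = p * (r - 1) + (r - 1) + (r - 1) := by ring
  have h₂' : (p + 2) * (r - 1) = p * (r - 1) + (r - 1) + (r - 1) := by ring
  rw [pathEdge, removeVerts_pathHypergraph hw fun a ha => by
    simp only [Finset.mem_Icc] at ha; omega]
  refine FinHypergraph.ext ?_ ?_
  · simp only [addVerts, pathHypergraph, ← Finset.image_union]
    congr 1
    ext a
    simp only [Finset.mem_sdiff, Finset.mem_Icc, Finset.mem_union, Finset.mem_Ioo]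
    omega
  · dsimp only [addVerts, pathHypergraph]
    refine congrArg _ (Finset.ext fun i => ?_)
    simp only [Finset.mem_filter, Finset.mem_range, Finset.disjoint_left, Finset.mem_Icc]
    constructor
    · rintro ⟨hi, h⟩
      by_contra hip
      obtain rfl | rfl : p = i ∨ i = p + 1 := by omega
      · exact h (a := (p + 1) * (r - 1)) ⟨by omega, le_rfl⟩ ⟨le_rfl, by omega⟩
      · exact h (a := (p + 1) * (r - 1)) ⟨le_rfl, by omega⟩ ⟨le_rfl, by omega⟩
    · intro hip
      have : (i + 1) * (r - 1) ≤ p * (r - 1) := Nat.mul_le_mul_right _ hip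
      exact ⟨by omega, fun a ha ha' => by omega⟩

lemma pathEdge_mem_edges {i p : ℕ} (hi : i < p) : pathEdge r w i ∈ (pathHypergraph r p w).edges :=
  Finset.mem_image_of_mem _ (Finset.mem_range.2 hi)

lemma matchPoly_pathHypergraph_zero (x : ℝ) : (pathHypergraph r 0 w).matchPoly r x = x := by
  rw [show pathHypergraph r 0 w = ⟨{w 0}, ∅⟩ by simp [pathHypergraph, loosePathEdges],
    matchPoly_edgeless, Finset.card_singleton, pow_one]

lemma matchPoly_pathHypergraph_succ (hr : 2 ≤ r) {p : ℕ}
    (hw : Set.InjOn w (Set.Iic ((p + 1) * (r - 1)))) (x : ℝ) :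
    (pathHypergraph r (p + 1) w).matchPoly r x = x ^ (r - 1) * (pathHypergraph r p w).matchPoly r x
      - ((pathHypergraph r (p + 1) w).removeVerts (pathEdge r w p)).matchPoly r x := by
  have hsucc : (p + 1) * (r - 1) = p * (r - 1) + (r - 1) := by ring
  have hwp : Set.InjOn w (Set.Iic (p * (r - 1))) := hw.mono (Set.Iic_subset_Iic.2 (by omega))
  have hdisj : Disjoint (pathHypergraph r p w).verts
      ((Finset.Ioc (p * (r - 1)) ((p + 1) * (r - 1))).image w) := by
    refine (disjoint_image_iff_of_injOn hw ?_ ?_).2 (Finset.disjoint_left.2 fun a ha ha' => ?_)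
    all_goals simp only [Finset.coe_Icc, Finset.coe_Ioc, Set.subset_def, Set.mem_Icc,
      Set.mem_Ioc, Set.mem_Iic, Finset.mem_Icc, Finset.mem_Ioc] at *
    all_goals omega
  have hcard : ((Finset.Ioc (p * (r - 1)) ((p + 1) * (r - 1))).image w).card = r - 1 := by
    rw [Finset.card_image_of_injOn (hw.mono fun a ha => by
      simp only [Finset.coe_Ioc, Set.mem_Ioc, Set.mem_Iic] at ha ⊢; omega), Nat.card_Ioc]
    omega
  rw [matchPoly_eq_deleteEdge_sub_removeVerts (by omega) (pathHypergraph_wellFormed r _ w)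
      (pathHypergraph_uniform (by omega) hw) (pathEdge_mem_edges p.lt_succ_self),
    deleteEdge_pathHypergraph_succ hr hw, matchPoly_addVerts (by omega)
      (pathHypergraph_wellFormed r p w) (pathHypergraph_uniform (by omega) hwp) hdisj, hcard,
    mul_comm]

theorem matchPoly_pathHypergraph (hr : 2 ≤ r) (p : ℕ) (hw : Set.InjOn w (Set.Iic (p * (r - 1))))
    (x : ℝ) : (pathHypergraph r p w).matchPoly r x = pathPoly r p x := by
  induction p using Nat.twoStepInduction with
  | zero => exact matchPoly_pathHypergraph_zero x
  | one =>
    have hempty : (pathHypergraph r 1 w).removeVerts (pathEdge r w 0) = ⟨∅, ∅⟩ := by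
      refine FinHypergraph.ext (by simp [removeVerts, pathHypergraph, pathEdge]) ?_
      simp [removeVerts, pathHypergraph_edges, pathEdge]
    rw [matchPoly_pathHypergraph_succ hr hw, matchPoly_pathHypergraph_zero, hempty,
      matchPoly_edgeless, pathPoly, Finset.card_empty, pow_zero, ← pow_succ,
      Nat.sub_add_cancel (by omega)]
  | more n ih₀ ih₁ =>
    have hle : ∀ k ≤ n + 2, Set.InjOn w (Set.Iic (k * (r - 1))) := fun k hk =>
      hw.mono (Set.Iic_subset_Iic.2 (Nat.mul_le_mul_right _ hk))
    have hsucc : (n + 1) * (r - 1) = n * (r - 1) + (r - 1) := by ring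
    have hdisj : Disjoint (pathHypergraph r n w).verts
        ((Finset.Ioo (n * (r - 1)) ((n + 1) * (r - 1))).image w) := by
      refine (disjoint_image_iff_of_injOn (hle (n + 1) (by omega)) ?_ ?_).2
        (Finset.disjoint_left.2 fun a ha ha' => ?_)
      all_goals simp only [Finset.coe_Icc, Finset.coe_Ioo, Set.subset_def, Set.mem_Icc,
        Set.mem_Ioo, Set.mem_Iic, Finset.mem_Icc, Finset.mem_Ioo] at *
      all_goals omega
    have hcard : ((Finset.Ioo (n * (r - 1)) ((n + 1) * (r - 1))).image w).card = r - 2 := by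
      rw [Finset.card_image_of_injOn ((hle (n + 1) (by omega)).mono fun a ha => by
        simp only [Finset.coe_Ioo, Set.mem_Ioo, Set.mem_Iic] at ha ⊢; omega), Nat.card_Ioo]
      omega
    rw [matchPoly_pathHypergraph_succ hr hw, ih₁ (hle _ (by omega)),
      removeVerts_pathEdge_pathHypergraph hr hw, matchPoly_addVerts (by omega)
        (pathHypergraph_wellFormed r n w) (pathHypergraph_uniform (by omega) (hle n (by omega)))
        hdisj, ih₀ (hle n (by omega)), hcard, pathPoly]
    ring

theorem matchPoly_of_isLoosePath (hr : 2 ≤ r) {p : ℕ} {P : FinHypergraph α}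
    (hP : IsLoosePath r p P) (x : ℝ) : P.matchPoly r x = pathPoly r p x := by
  obtain ⟨w, hw, hv, he⟩ := hP
  rw [show P = pathHypergraph r p w from FinHypergraph.ext hv he]
  exact matchPoly_pathHypergraph hr p hw x

lemma pathHypergraph_shift (s p : ℕ) :
    pathHypergraph r p (fun n => w (n + s * (r - 1))) =
      ⟨(Finset.Icc (s * (r - 1)) ((s + p) * (r - 1))).image w,
        (Finset.Ico s (s + p)).image (pathEdge r w)⟩ := by
  have hshift : ∀ A : Finset ℕ,
      A.image (fun n => w (n + s * (r - 1))) = (A.image (· + s * (r - 1))).image w := fun A => by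
    rw [Finset.image_image]; rfl
  refine FinHypergraph.ext ?_ ?_
  · simp only [pathHypergraph, hshift, Finset.image_add_right_Icc, zero_add, add_mul, add_comm]
  · simp only [pathHypergraph_edges, Finset.range_eq_Ico]
    rw [show Finset.Ico s (s + p) = (Finset.Ico 0 p).image (· + s) by
      rw [Finset.image_add_right_Ico, zero_add, add_comm], Finset.image_image]
    refine Finset.image_congr fun i _ => ?_
    simp only [Function.comp, pathEdge, hshift, Finset.image_add_right_Icc]
    congr 2 <;> ring

/-- Deleting the vertices `J` from the middle of `P_d` leaves `P_lft`, the isolated vertices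
`Mid`, and a relabelled `P_(d−rt)`; `hedges` and `hverts` say this on the level of indices. -/
lemma removeVerts_pathHypergraph_eq_union {lft rt : ℕ}
    (hw : Set.InjOn w (Set.Iic (d * (r - 1)))) {J Mid : Finset ℕ}
    (hJ : ∀ a ∈ J, a ≤ d * (r - 1)) (hrt : rt ≤ d)
    (hedges : (Finset.range d).filter (fun i =>
        Disjoint (Finset.Icc (i * (r - 1)) ((i + 1) * (r - 1))) J)
      = Finset.range lft ∪ Finset.Ico rt d)
    (hverts : Finset.Icc 0 (d * (r - 1)) \ J
      = Finset.Icc 0 (lft * (r - 1)) ∪ Mid ∪ Finset.Icc (rt * (r - 1)) (d * (r - 1))) :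
    (pathHypergraph r d w).removeVerts (J.image w) =
      ((pathHypergraph r lft w).addVerts (Mid.image w)).union
        (pathHypergraph r (d - rt) (fun n => w (n + rt * (r - 1)))) := by
  rw [removeVerts_pathHypergraph hw hJ, hedges, hverts, pathHypergraph_shift,
    Nat.add_sub_cancel' hrt]
  simp only [union, addVerts, pathHypergraph, Finset.image_union]
  rfl

lemma injOn_shift {N s : ℕ} (hw : Set.InjOn w (Set.Iic (s + N))) :
    Set.InjOn (fun n => w (n + s)) (Set.Iic N) := fun a ha b hb hab =>
  Nat.add_right_cancel (hw (show a + s ≤ s + N by simp at ha; omega)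
    (show b + s ≤ s + N by simp at hb; omega) hab)

theorem matchPoly_removeVerts_pathHypergraph (hr : 2 ≤ r) {lft rt : ℕ}
    (hw : Set.InjOn w (Set.Iic (d * (r - 1)))) {J Mid : Finset ℕ}
    (hJ : ∀ a ∈ J, a ≤ d * (r - 1)) (hlr : lft < rt) (hrt : rt ≤ d)
    (hedges : (Finset.range d).filter (fun i =>
        Disjoint (Finset.Icc (i * (r - 1)) ((i + 1) * (r - 1))) J)
      = Finset.range lft ∪ Finset.Ico rt d)
    (hverts : Finset.Icc 0 (d * (r - 1)) \ J
      = Finset.Icc 0 (lft * (r - 1)) ∪ Mid ∪ Finset.Icc (rt * (r - 1)) (d * (r - 1)))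
    (hMid : ∀ a ∈ Mid, lft * (r - 1) < a ∧ a < rt * (r - 1)) (x : ℝ) :
    ((pathHypergraph r d w).removeVerts (J.image w)).matchPoly r x
      = pathPoly r lft x * pathPoly r (d - rt) x * x ^ Mid.card := by
  have hlt : lft * (r - 1) < rt * (r - 1) := Nat.mul_lt_mul_of_pos_right hlr (by omega)
  have hrtd : rt * (r - 1) ≤ d * (r - 1) := Nat.mul_le_mul_right _ hrt
  have hsplit : rt * (r - 1) + (d - rt) * (r - 1) = d * (r - 1) := by
    rw [← add_mul, Nat.add_sub_cancel' hrt]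
  have hwL : Set.InjOn w (Set.Iic (lft * (r - 1))) := hw.mono (Set.Iic_subset_Iic.2 (by omega))
  have hwR := injOn_shift (N := (d - rt) * (r - 1)) (hsplit ▸ hw)
  have hMidle : ↑Mid ⊆ Set.Iic (d * (r - 1)) := fun a ha => by
    have := hMid a ha; simp only [Set.mem_Iic]; omega
  have hdisjM : Disjoint (pathHypergraph r lft w).verts (Mid.image w) := by
    refine (disjoint_image_iff_of_injOn hw (fun a ha => ?_) hMidle).2
      (Finset.disjoint_left.2 fun a ha ha' => ?_)
    · simp only [Finset.coe_Icc, Set.mem_Icc, Set.mem_Iic] at ha ⊢; omega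
    · have := hMid a ha'; simp only [Finset.mem_Icc] at ha; omega
  have hdisjR : Disjoint ((pathHypergraph r lft w).addVerts (Mid.image w)).verts
      (pathHypergraph r (d - rt) (fun n => w (n + rt * (r - 1)))).verts := by
    simp only [addVerts, pathHypergraph_shift, Nat.add_sub_cancel' hrt]
    simp only [pathHypergraph, ← Finset.image_union]
    refine (disjoint_image_iff_of_injOn hw (fun a ha => ?_) (fun a ha => ?_)).2
      (Finset.disjoint_left.2 fun a ha ha' => ?_)
    · simp only [Finset.coe_union, Finset.coe_Icc, Set.mem_union, Set.mem_Icc,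
        Set.mem_Iic] at ha ⊢
      rcases ha with ha | ha
      · omega
      · exact hMidle ha
    · simp only [Finset.coe_Icc, Set.mem_Icc, Set.mem_Iic] at ha ⊢; omega
    · simp only [Finset.mem_union, Finset.mem_Icc] at ha ha'
      rcases ha with ha | ha
      · omega
      · have := hMid a ha; omega
  have hLWF := pathHypergraph_wellFormed r lft w
  have hLU := pathHypergraph_uniform (by omega) hwL
  rw [removeVerts_pathHypergraph_eq_union hw hJ hrt hedges hverts,
    matchPoly_union (by omega) (hLWF.addVerts _) (hLU.addVerts _)
      (pathHypergraph_wellFormed r _ _) (pathHypergraph_uniform (by omega) hwR) hdisjR,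
    matchPoly_addVerts (by omega) hLWF hLU hdisjM,
    Finset.card_image_of_injOn (hw.mono hMidle), matchPoly_pathHypergraph hr _ hwL,
    matchPoly_pathHypergraph hr _ hwR]
  ring

theorem matchPoly_removeVerts_joint_pathHypergraph (hr : 2 ≤ r)
    (hw : Set.InjOn w (Set.Iic (d * (r - 1)))) (hj : 1 ≤ j) (hjd : j + 1 ≤ d) (x : ℝ) :
    ((pathHypergraph r d w).removeVerts {w (j * (r - 1))}).matchPoly r x
      = pathPoly r (j - 1) x * pathPoly r (d - (j + 1)) x * x ^ (2 * (r - 2)) := by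
  have h₁ : (j - 1) * (r - 1) + (r - 1) = j * (r - 1) := by
    rw [← Nat.succ_mul, Nat.succ_eq_add_one, Nat.sub_add_cancel hj]
  have h₂ : (j + 1) * (r - 1) = j * (r - 1) + (r - 1) := by ring
  have h₃ : (j + 1) * (r - 1) ≤ d * (r - 1) := Nat.mul_le_mul_right _ hjd
  have hMid : (Finset.Ioo ((j - 1) * (r - 1)) (j * (r - 1)) ∪
      Finset.Ioo (j * (r - 1)) ((j + 1) * (r - 1))).card = 2 * (r - 2) := by
    rw [Finset.card_union_of_disjoint (Finset.disjoint_left.2 fun a ha ha' => by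
      simp only [Finset.mem_Ioo] at ha ha'; omega), Nat.card_Ioo, Nat.card_Ioo]
    omega
  rw [← hMid, ← Finset.image_singleton]
  refine matchPoly_removeVerts_pathHypergraph hr hw (by simp; omega) (by omega) hjd ?_ ?_
    (fun a ha => by simp only [Finset.mem_union, Finset.mem_Ioo] at ha; omega) x
  · ext i
    have := Nat.mul_le_mul_right_iff (n := i) (m := j) (k := r - 1) (by omega)
    have := Nat.mul_le_mul_right_iff (n := j) (m := i + 1) (k := r - 1) (by omega)
    have : (i + 1) * (r - 1) = i * (r - 1) + (r - 1) := by ring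
    simp only [Finset.mem_filter, Finset.mem_range, Finset.mem_union, Finset.mem_Ico,
      Finset.disjoint_singleton_right, Finset.mem_Icc]
    omega
  · ext a
    simp only [Finset.mem_sdiff, Finset.mem_Icc, Finset.mem_union, Finset.mem_Ioo,
      Finset.mem_singleton]
    omega

theorem matchPoly_removeVerts_core_pathHypergraph (hr : 2 ≤ r)
    (hw : Set.InjOn w (Set.Iic (d * (r - 1)))) (hjd : j + 1 ≤ d) {c : ℕ}
    (hc₁ : j * (r - 1) < c) (hc₂ : c < (j + 1) * (r - 1)) (x : ℝ) :
    ((pathHypergraph r d w).removeVerts {w c}).matchPoly r x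
      = pathPoly r j x * pathPoly r (d - (j + 1)) x * x ^ (r - 3) := by
  have h₂ : (j + 1) * (r - 1) = j * (r - 1) + (r - 1) := by ring
  have h₃ : (j + 1) * (r - 1) ≤ d * (r - 1) := Nat.mul_le_mul_right _ hjd
  have hMid : (Finset.Ioo (j * (r - 1)) ((j + 1) * (r - 1)) \ {c}).card = r - 3 := by
    rw [Finset.card_sdiff_of_subset (Finset.singleton_subset_iff.2 (Finset.mem_Ioo.2 ⟨hc₁, hc₂⟩)),
      Nat.card_Ioo, Finset.card_singleton]
    omega
  rw [← hMid, ← Finset.image_singleton]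
  refine matchPoly_removeVerts_pathHypergraph hr hw (by simp; omega) (by omega) hjd ?_ ?_
    (fun a ha => by simp only [Finset.mem_sdiff, Finset.mem_Ioo] at ha; omega) x
  · ext i
    have := Nat.mul_le_mul_right_iff (n := i + 1) (m := j) (k := r - 1) (by omega)
    have := Nat.mul_le_mul_right_iff (n := j + 1) (m := i) (k := r - 1) (by omega)
    have := Nat.mul_le_mul_right_iff (n := i) (m := j) (k := r - 1) (by omega)
    have := Nat.mul_le_mul_right_iff (n := j + 1) (m := i + 1) (k := r - 1) (by omega)
    have : (i + 1) * (r - 1) = i * (r - 1) + (r - 1) := by ring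
    simp only [Finset.mem_filter, Finset.mem_range, Finset.mem_union, Finset.mem_Ico,
      Finset.disjoint_singleton_right, Finset.mem_Icc]
    omega
  · ext a
    simp only [Finset.mem_sdiff, Finset.mem_Icc, Finset.mem_union, Finset.mem_Ioo,
      Finset.mem_singleton]
    omega

theorem matchPoly_removeVerts_two_joints_pathHypergraph (hr : 2 ≤ r)
    (hw : Set.InjOn w (Set.Iic (d * (r - 1)))) (hj : 1 ≤ j) (hjd : j + 2 ≤ d) (x : ℝ) :
    ((pathHypergraph r d w).removeVerts {w (j * (r - 1)), w ((j + 1) * (r - 1))}).matchPoly r x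
      = pathPoly r (j - 1) x * pathPoly r (d - (j + 2)) x * x ^ (3 * (r - 2)) := by
  have h₁ : (j - 1) * (r - 1) + (r - 1) = j * (r - 1) := by
    rw [← Nat.succ_mul, Nat.succ_eq_add_one, Nat.sub_add_cancel hj]
  have h₂ : (j + 1) * (r - 1) = j * (r - 1) + (r - 1) := by ring
  have h₂' : (j + 2) * (r - 1) = j * (r - 1) + (r - 1) + (r - 1) := by ring
  have h₃ : (j + 2) * (r - 1) ≤ d * (r - 1) := Nat.mul_le_mul_right _ hjd
  have hMid : (Finset.Ioo ((j - 1) * (r - 1)) (j * (r - 1)) ∪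
      Finset.Ioo (j * (r - 1)) ((j + 1) * (r - 1)) ∪
      Finset.Ioo ((j + 1) * (r - 1)) ((j + 2) * (r - 1))).card = 3 * (r - 2) := by
    rw [Finset.card_union_of_disjoint (Finset.disjoint_left.2 fun a ha ha' => by
        simp only [Finset.mem_union, Finset.mem_Ioo] at ha ha'; omega),
      Finset.card_union_of_disjoint (Finset.disjoint_left.2 fun a ha ha' => by
        simp only [Finset.mem_Ioo] at ha ha'; omega), Nat.card_Ioo, Nat.card_Ioo, Nat.card_Ioo]
    omega
  rw [← hMid, show ({w (j * (r - 1)), w ((j + 1) * (r - 1))} : Finset α)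
    = ({j * (r - 1), (j + 1) * (r - 1)} : Finset ℕ).image w by simp]
  refine matchPoly_removeVerts_pathHypergraph hr hw (by simp; omega) (by omega) hjd ?_ ?_
    (fun a ha => by simp only [Finset.mem_union, Finset.mem_Ioo] at ha; omega) x
  · ext i
    have := Nat.mul_le_mul_right_iff (n := i) (m := j) (k := r - 1) (by omega)
    have := Nat.mul_le_mul_right_iff (n := j) (m := i + 1) (k := r - 1) (by omega)
    have := Nat.mul_le_mul_right_iff (n := i) (m := j + 1) (k := r - 1) (by omega)
    have := Nat.mul_le_mul_right_iff (n := j + 1) (m := i + 1) (k := r - 1) (by omega)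
    have : (i + 1) * (r - 1) = i * (r - 1) + (r - 1) := by ring
    simp only [Finset.mem_filter, Finset.mem_range, Finset.mem_union, Finset.mem_Ico,
      Finset.disjoint_insert_right, Finset.disjoint_singleton_right, Finset.mem_Icc]
    omega
  · ext a
    simp only [Finset.mem_sdiff, Finset.mem_Icc, Finset.mem_union, Finset.mem_Ioo,
      Finset.mem_insert, Finset.mem_singleton]
    omega

end LoosePaths

section Supertrees

variable {w : ℕ → α} {d j k : ℕ} {T₁ T : FinHypergraph α}

theorem matchPoly_pendant_at_consecutive_joints (hr : 2 ≤ r)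
    (hw : Set.InjOn w (Set.Iic (d * (r - 1)))) (hj : 1 ≤ j) (hjd : j + 2 ≤ d)
    (hT₁ : IsPendantEdgesAttach r k (pathHypergraph r d w) (w (j * (r - 1))) T₁)
    (hT : IsPendantEdgesAttach r 1 T₁ (w ((j + 1) * (r - 1))) T) (x : ℝ) :
    T.matchPoly r x
      = x ^ (r - 1) * (x ^ (k * (r - 1)) * pathPoly r d x - k * x ^ ((k - 1) * (r - 1)) *
          (pathPoly r (j - 1) x * pathPoly r (d - (j + 1)) x * x ^ (2 * (r - 2))))
        - (x ^ (k * (r - 1)) * (pathPoly r j x * pathPoly r (d - (j + 2)) x * x ^ (2 * (r - 2)))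
          - k * x ^ ((k - 1) * (r - 1)) *
            (pathPoly r (j - 1) x * pathPoly r (d - (j + 2)) x * x ^ (3 * (r - 2)))) := by
  have hPWF := pathHypergraph_wellFormed r d w
  have hPU := pathHypergraph_uniform (by omega) hw
  have hle : (j + 1) * (r - 1) ≤ d * (r - 1) := Nat.mul_le_mul_right _ (by omega)
  have hv : w ((j + 1) * (r - 1)) ∈ (pathHypergraph r d w).verts :=
    Finset.mem_image_of_mem w (Finset.mem_Icc.2 ⟨Nat.zero_le _, hle⟩)
  have huv : w (j * (r - 1)) ∉ ({w ((j + 1) * (r - 1))} : Finset α) := fun h => by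
    have hlt : j * (r - 1) < (j + 1) * (r - 1) :=
      Nat.mul_lt_mul_of_pos_right (by omega) (by omega)
    exact hlt.ne (hw (Set.mem_Iic.2 (by omega)) (Set.mem_Iic.2 hle) (Finset.mem_singleton.1 h))
  rw [matchPoly_of_isPendantEdgesAttach hr (hT₁.wellFormed hPWF) (hT₁.uniform (by omega) hPU) hT,
    matchPoly_of_isPendantEdgesAttach hr hPWF hPU hT₁,
    matchPoly_of_isPendantEdgesAttach hr (hPWF.removeVerts _) (hPU.removeVerts _)
      (hT₁.removeVerts (Finset.singleton_subset_iff.2 hv) huv),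
    removeVerts_removeVerts, Finset.union_comm, ← Finset.insert_eq,
    matchPoly_pathHypergraph hr d hw,
    matchPoly_removeVerts_joint_pathHypergraph hr hw hj (by omega),
    matchPoly_removeVerts_joint_pathHypergraph hr hw (by omega) (by omega),
    matchPoly_removeVerts_two_joints_pathHypergraph hr hw hj hjd]
  simp only [Nat.add_sub_cancel, Nat.sub_self, zero_mul, pow_zero, one_mul, Nat.cast_one,
    add_assoc, Nat.reduceAdd]

theorem matchPoly_pendant_at_core (hr : 2 ≤ r) (hw : Set.InjOn w (Set.Iic (d * (r - 1))))
    (hjd : j + 1 ≤ d) {c : ℕ} (hc₁ : j * (r - 1) < c) (hc₂ : c < (j + 1) * (r - 1))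
    (hT : IsPendantEdgesAttach r k (pathHypergraph r d w) (w c) T) (x : ℝ) :
    T.matchPoly r x = x ^ (k * (r - 1)) * pathPoly r d x
      - k * x ^ ((k - 1) * (r - 1)) *
          (pathPoly r j x * pathPoly r (d - (j + 1)) x * x ^ (r - 3)) := by
  rw [matchPoly_of_isPendantEdgesAttach hr (pathHypergraph_wellFormed r d w)
      (pathHypergraph_uniform (by omega) hw) hT, matchPoly_pathHypergraph hr d hw,
    matchPoly_removeVerts_core_pathHypergraph hr hw hjd hc₁ hc₂]

lemma doublestar_sub_core_star_identity {r a : ℕ} (hr : 3 ≤ r) (x A B C D P : ℝ) :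
    x ^ (r - 1) * (x ^ (a * (r - 1)) * P
        - a * x ^ ((a - 1) * (r - 1)) * (A * D * x ^ (2 * (r - 2))))
      - (x ^ (a * (r - 1)) * (B * C * x ^ (2 * (r - 2)))
        - a * x ^ ((a - 1) * (r - 1)) * (A * C * x ^ (3 * (r - 2))))
      - (x ^ ((a + 1) * (r - 1)) * P
        - ((a + 1 : ℕ) : ℝ) * x ^ ((a + 1 - 1) * (r - 1)) * (B * D * x ^ (r - 3)))
    = x ^ ((a + 1) * (r - 1) - 2) * (B * D - x ^ (r - 1) * B * C)
      + a * x ^ ((a + 1) * (r - 1) - 2) * (B * D - A * (x ^ (r - 1) * D - x ^ (r - 2) * C)) := by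
  obtain ⟨t, rfl⟩ : ∃ t, r = t + 3 := ⟨r - 3, by omega⟩
  rw [show t + 3 - 1 = t + 2 by omega, show t + 3 - 2 = t + 1 by omega,
    show t + 3 - 3 = t by omega, Nat.add_sub_cancel,
    show (a + 1) * (t + 2) - 2 = a * (t + 2) + t by rw [add_one_mul]; omega]
  rcases a with _ | a
  · simp only [Nat.cast_zero, zero_mul, zero_add, Nat.cast_one, one_mul]
    ring
  · simp only [Nat.add_sub_cancel, Nat.cast_add, Nat.cast_one]
    ring

end Supertrees

end FinHypergraph

open FinHypergraph

/-- For `r ≥ 3`, `d ≥ 3`, `m ≥ d + 2`, `a = m − d − 1` and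
`b = ⌈d/2⌉`, let `T''` be obtained from the loose path `P_d^r` by attaching `a` pendant
edges at the joint vertex `v_b` and one pendant edge at the joint vertex `v_{b+1}`, and
let `T_{(m,d,r)}(b)` be obtained from `P_d^r` by attaching `m − d` pendant edges at a
fixed core vertex of the edge `e_b`. Then
`φ(T'', x) − φ(T_{(m,d,r)}(b), x)
  = x^((a+1)(r−1)−2)·( φ(P_{b−1}^r,x)·φ(P_{d−b}^r,x)
      − x^(r−1)·φ(P_{b−1}^r,x)·φ(P_{d−b−1}^r,x) )
  + a·x^((a+1)(r−1)−2)·( φ(P_{b−1}^r,x)·φ(P_{d−b}^r,x)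
      − φ(P_{b−2}^r,x)·φ(P_{d−b+1}^r,x) )`. -/
theorem matchPoly_doublestar_sub_core_star {α : Type*} (r d m : ℕ)
    (hr : 3 ≤ r) (hd : 3 ≤ d) (hm : d + 2 ≤ m)
    (w1 : ℕ → α) (hw1 : Set.InjOn w1 (Set.Iic (d * (r - 1))))
    (T1 T'' : FinHypergraph α)
    (hT1 : IsPendantEdgesAttach r (m - d - 1) (pathHypergraph r d w1)
      (w1 (((d + 1) / 2 - 1) * (r - 1))) T1)
    (hT'' : IsPendantEdgesAttach r 1 T1 (w1 (((d + 1) / 2) * (r - 1))) T'')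
    (w2 : ℕ → α) (hw2 : Set.InjOn w2 (Set.Iic (d * (r - 1))))
    (c : ℕ) (hc1 : ((d + 1) / 2 - 1) * (r - 1) < c) (hc2 : c < ((d + 1) / 2) * (r - 1))
    (Tm : FinHypergraph α)
    (hTm : IsPendantEdgesAttach r (m - d) (pathHypergraph r d w2) (w2 c) Tm)
    (R1 R2 R3 R4 R5 : FinHypergraph α)
    (hR1 : IsLoosePath r ((d + 1) / 2 - 1) R1)
    (hR2 : IsLoosePath r (d - (d + 1) / 2) R2)
    (hR3 : IsLoosePath r (d - (d + 1) / 2 - 1) R3)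
    (hR4 : IsLoosePath r ((d + 1) / 2 - 2) R4)
    (hR5 : IsLoosePath r (d - (d + 1) / 2 + 1) R5) :
    ∀ x : ℝ, T''.matchPoly r x - Tm.matchPoly r x
      = x ^ ((m - d) * (r - 1) - 2) *
            (R1.matchPoly r x * R2.matchPoly r x
              - x ^ (r - 1) * R1.matchPoly r x * R3.matchPoly r x)
        + ((m - d - 1 : ℕ) : ℝ) * x ^ ((m - d) * (r - 1) - 2) *
            (R1.matchPoly r x * R2.matchPoly r x
              - R4.matchPoly r x * R5.matchPoly r x) := by
  intro x
  -- labels start at `0`, so `v_b = w1 (j * (r - 1))` and `e_b` is edge `j`, for `j = b - 1`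
  set j := (d + 1) / 2 - 1
  obtain ⟨a, ha⟩ : ∃ a, m - d = a + 1 := ⟨m - d - 1, by omega⟩
  rw [show (d + 1) / 2 = j + 1 by omega] at hT'' hc2
  rw [show m - d - 1 = a by omega] at hT1 ⊢
  rw [ha] at hTm ⊢
  rw [matchPoly_pendant_at_consecutive_joints (by omega) hw1 (by omega) (by omega) hT1 hT'',
    matchPoly_pendant_at_core (by omega) hw2 (by omega) hc1 hc2 hTm,
    matchPoly_of_isLoosePath (by omega) hR1, matchPoly_of_isLoosePath (by omega) hR2,
    matchPoly_of_isLoosePath (by omega) hR3, matchPoly_of_isLoosePath (by omega) hR4,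
    matchPoly_of_isLoosePath (by omega) hR5, show (d + 1) / 2 - 2 = j - 1 by omega,
    show d - (d + 1) / 2 = d - (j + 1) by omega, show d - (j + 1) - 1 = d - (j + 2) by omega,
    show d - (j + 1) + 1 = d - (j + 2) + 2 by omega, pathPoly_add_two,
    show d - (j + 2) + 1 = d - (j + 1) by omega]
  exact doublestar_sub_core_star_identity hr _ _ _ _ _ _
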